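/- arXiv:2302.06796 — 3 statements merged into one kernel-verified Lean document; each statement's English description precedes it below -/
import Mathlib

section
/- If ζₙ → ζ in the Wasserstein₁ sense (weak convergence plus convergence of first moments) on the space of finite nonnegative Borel measures on [0,∞) with finite first moment, then F_{ζₙ} converges to F_ζ uniformly on [0,∞). -/
open MeasureTheory Filter

/-- `F_ζ(x) = ∫ min(y,x) dζ(y)`. -/
noncomputable def Fz (ζ : Measure ℝ) (x : ℝ) : ℝ := ∫ y, min y x ∂ζ

/-!
On a compact interval `[0, M]` the functions `F_{ζₙ}` are Lipschitz with a common constant (a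
bound on the masses, which converge), so their pointwise convergence, obtained by testing against
the bounded continuous function `y ↦ min (max y 0) x`, is uniform by equicontinuity. Beyond `M`,
monotonicity squeezes each `F` between its value at `M` and the first moment, and for `M` large
the convergence of first moments makes that gap uniformly small.
-/

open Topology

theorem EquicontinuousOn.tendstoUniformlyOn_of_tendsto {ι X α : Type*} [TopologicalSpace X]
    [UniformSpace α] {F : ι → X → α} {f : X → α} {K : Set X} {l : Filter ι}
    (hK : IsCompact K) (hF : EquicontinuousOn F K) (h : ∀ x ∈ K, Tendsto (F · x) l (𝓝 (f x))) :
    TendstoUniformlyOn F f l K := by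
  have := (EquicontinuousOn.tendsto_uniformOnFun_iff_pi' (𝔖 := {K}) (by simpa using hK)
    (by simpa using hF) l f).2 ?_
  · rw [UniformOnFun.tendsto_iff_tendstoUniformlyOn] at this
    exact this K rfl
  · rw [tendsto_pi_nhds]
    simpa using fun x hx => h x hx

variable {μ : Measure ℝ}

theorem integrable_min_const [IsFiniteMeasure μ] (h : Integrable id μ) (x : ℝ) :
    Integrable (fun y => min y x) μ := by
  refine (h.norm.add (integrable_const |x|)).mono'
    (measurable_id.min measurable_const).aestronglyMeasurable (ae_of_all _ fun y => ?_)
  simpa [Real.norm_eq_abs] using (abs_min_le_max_abs_abs (a := y) (b := x)).trans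
    (max_le_add_of_nonneg (abs_nonneg _) (abs_nonneg _))

theorem Fz_mono [IsFiniteMeasure μ] (h : Integrable id μ) : Monotone (Fz μ) := fun _ _ hxx =>
  integral_mono (integrable_min_const h _) (integrable_min_const h _)
    fun _ => min_le_min le_rfl hxx

theorem Fz_le_integral [IsFiniteMeasure μ] (h : Integrable id μ) (x : ℝ) :
    Fz μ x ≤ ∫ y, y ∂μ :=
  integral_mono (integrable_min_const h x) h fun y => min_le_left y x

theorem lipschitzWith_Fz [IsFiniteMeasure μ] (h : Integrable id μ) :
    LipschitzWith (μ.real Set.univ).toNNReal (Fz μ) := by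
  refine LipschitzWith.of_dist_le_mul fun x x' => ?_
  rw [Real.coe_toNNReal _ measureReal_nonneg, dist_comm x, mul_comm, dist_eq_norm, Fz, Fz,
    ← integral_sub (integrable_min_const h x) (integrable_min_const h x')]
  refine norm_integral_le_of_norm_le_const (ae_of_all μ fun y => ?_)
  simpa [Real.dist_eq, abs_sub_comm x'] using abs_min_sub_min_le_max y x y x'

theorem tendsto_Fz_atTop (h : Integrable id μ) : Tendsto (Fz μ) atTop (𝓝 (∫ y, y ∂μ)) := by
  refine tendsto_integral_filter_of_dominated_convergence (fun y => |y|)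
    (Eventually.of_forall fun M => (measurable_id.min measurable_const).aestronglyMeasurable)
    ?_ h.abs (ae_of_all _ fun y => tendsto_const_nhds.congr' ?_)
  · filter_upwards [eventually_ge_atTop 0] with M hM
    refine ae_of_all _ fun y => ?_
    rcases le_total y M with hyM | hMy
    · simp [min_eq_left hyM]
    · simp [abs_of_nonneg hM, abs_of_nonneg (hM.trans hMy), hMy]
  · filter_upwards [eventually_ge_atTop y] with M hM
    exact (min_eq_left hM).symm

theorem dist_Fz_le_of_le {ν : Measure ℝ} [IsFiniteMeasure μ] [IsFiniteMeasure ν]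
    (hμ : Integrable id μ) (hν : Integrable id ν) {M x : ℝ} (hMx : M ≤ x) :
    dist (Fz μ x) (Fz ν x) ≤
      (∫ y, y ∂μ - Fz μ M) + dist (Fz μ M) (Fz ν M) + dist (∫ y, y ∂μ) (∫ y, y ∂ν) := by
  have := Fz_mono hμ hMx
  have := Fz_mono hν hMx
  have := Fz_le_integral hμ x
  have := Fz_le_integral hν x
  simp only [Real.dist_eq, abs_le] at *
  constructor <;> linarith [le_abs_self (Fz μ M - Fz ν M), neg_abs_le (Fz μ M - Fz ν M),
    le_abs_self (∫ y, y ∂μ - ∫ y, y ∂ν), neg_abs_le (∫ y, y ∂μ - ∫ y, y ∂ν)]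

theorem Fz_eq_integral_projIcc (hμ : μ (Set.Iio 0) = 0) {x : ℝ} (hx : 0 ≤ x) :
    Fz μ x = ∫ y, (Set.projIcc 0 x hx y : ℝ) ∂μ := by
  refine integral_congr_ae ?_
  filter_upwards [measure_eq_zero_iff_ae_notMem.1 hμ] with y hy
  simp_all [Set.coe_projIcc, min_comm]

theorem tendsto_Fz_of_forall_tendsto_integral {ι : Type*} {l : Filter ι} {μs : ι → Measure ℝ}
    (hμs : ∀ i, μs i (Set.Iio 0) = 0) (hμ : μ (Set.Iio 0) = 0)
    (hweak : ∀ f : BoundedContinuousFunction ℝ ℝ,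
      Tendsto (fun i => ∫ y, f y ∂μs i) l (𝓝 (∫ y, f y ∂μ))) {x : ℝ} (hx : 0 ≤ x) :
    Tendsto (fun i => Fz (μs i) x) l (𝓝 (Fz μ x)) := by
  let f : BoundedContinuousFunction ℝ ℝ :=
    (BoundedContinuousFunction.mkOfCompact ⟨Subtype.val, continuous_subtype_val⟩).compContinuous
      ⟨Set.projIcc 0 x hx, continuous_projIcc⟩
  simp only [Fz_eq_integral_projIcc hμ hx, Fz_eq_integral_projIcc (hμs _) hx]
  exact hweak f

theorem equicontinuous_Fz {ι : Type*} {μs : ι → Measure ℝ} [∀ i, IsFiniteMeasure (μs i)]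
    (hμs : ∀ i, Integrable id (μs i)) {C : ℝ} (hC : ∀ i, (μs i).real Set.univ ≤ C) :
    Equicontinuous fun i => Fz (μs i) :=
  (LipschitzWith.uniformEquicontinuous _ C.toNNReal fun i =>
    (lipschitzWith_Fz (hμs i)).weaken (Real.toNNReal_le_toNNReal (hC i))).equicontinuous

theorem stmt2 (ζn : ℕ → Measure ℝ) (ζ : Measure ℝ)
    (hfin : ∀ n, IsFiniteMeasure (ζn n)) [IsFiniteMeasure ζ]
    (hsuppn : ∀ n, ζn n (Set.Iio 0) = 0) (hsupp : ζ (Set.Iio 0) = 0)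
    (hintn : ∀ n, Integrable id (ζn n)) (hint : Integrable id ζ)
    (hweak : ∀ f : BoundedContinuousFunction ℝ ℝ,
      Tendsto (fun n => ∫ y, f y ∂(ζn n)) atTop (nhds (∫ y, f y ∂ζ)))
    (hmom : Tendsto (fun n => ∫ y, y ∂(ζn n)) atTop (nhds (∫ y, y ∂ζ))) :
    TendstoUniformlyOn (fun n x => Fz (ζn n) x) (Fz ζ) atTop (Set.Ici 0) := by
  have hmass : Tendsto (fun n => (ζn n).real Set.univ) atTop (𝓝 (ζ.real Set.univ)) := by
    simpa using hweak (BoundedContinuousFunction.const ℝ 1)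
  obtain ⟨C, hC⟩ := hmass.bddAbove_range
  have hcompact (M : ℝ) :
      TendstoUniformlyOn (fun n => Fz (ζn n)) (Fz ζ) atTop (Set.Icc 0 M) :=
    ((equicontinuous_Fz hintn fun n => hC ⟨n, rfl⟩).equicontinuousOn _
      ).tendstoUniformlyOn_of_tendsto isCompact_Icc
      fun x hx => tendsto_Fz_of_forall_tendsto_integral hsuppn hsupp hweak hx.1
  rw [Metric.tendstoUniformlyOn_iff]
  intro ε hε
  obtain ⟨M, hM, hMtail⟩ : ∃ M, 0 ≤ M ∧ ∫ y, y ∂ζ - ε / 3 < Fz ζ M :=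
    ((eventually_ge_atTop 0).and
      (tendsto_order.1 (tendsto_Fz_atTop hint) |>.1 _ (by linarith))).exists
  filter_upwards [Metric.tendstoUniformlyOn_iff.1 (hcompact M) _ (by positivity : 0 < ε / 3),
    Metric.tendsto_nhds.1 hmom _ (by positivity : 0 < ε / 3)] with n hcompactn hmomn x hx
  rcases le_total x M with hxM | hMx
  · exact (hcompactn x ⟨hx, hxM⟩).trans (by linarith)
  · calc dist (Fz ζ x) (Fz (ζn n) x)
        ≤ (∫ y, y ∂ζ - Fz ζ M) + dist (Fz ζ M) (Fz (ζn n) M)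
          + dist (∫ y, y ∂ζ) (∫ y, y ∂(ζn n)) := dist_Fz_le_of_le hint (hintn n) hMx
      _ < ε := by linarith [hcompactn M ⟨hM, le_rfl⟩, dist_comm (∫ y, y ∂ζ) (∫ y, y ∂(ζn n))]
end

section
/- A uniformly bounded sequence of continuous non-decreasing functions Fₙ: [0,∞) → ℝ that converges pointwise to a continuous non-decreasing bounded function F, where additionally sup Fₙ → sup F, converges uniformly on [0,∞). -/
open Filter

theorem stmt3 (Fn : ℕ → ℝ → ℝ) (F : ℝ → ℝ) (L : ℝ)
    (hFnc : ∀ n, ContinuousOn (Fn n) (Set.Ici 0))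
    (hFnm : ∀ n, MonotoneOn (Fn n) (Set.Ici 0))
    (hFc : ContinuousOn F (Set.Ici 0))
    (hFm : MonotoneOn F (Set.Ici 0))
    (hbdd : ∃ C : ℝ, ∀ n, ∀ x ∈ Set.Ici (0 : ℝ), |Fn n x| ≤ C)
    (hL : IsLUB (F '' Set.Ici 0) L)
    (hpt : ∀ x ∈ Set.Ici (0 : ℝ), Tendsto (fun n => Fn n x) atTop (nhds (F x)))
    (hsup : Tendsto (fun n => sSup (Fn n '' Set.Ici 0)) atTop (nhds L)) :
    TendstoUniformlyOn (fun n x => Fn n x) F atTop (Set.Ici 0) := by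
  rw [Metric.tendstoUniformlyOn_iff]
  intro ε hε
  obtain ⟨C, hC⟩ := hbdd
  set δ := ε / 2 with hδdef
  have hδ : 0 < δ := by positivity
  have hF0L : F 0 ≤ L := hL.1 ⟨0, Set.mem_Ici.mpr le_rfl, rfl⟩
  -- IVT claim
  have claim : ∀ c, F 0 ≤ c → c ≤ max (L - δ) (F 0) → ∃ x, 0 ≤ x ∧ F x = c := by
    intro c hc1 hc2
    rcases eq_or_lt_of_le hc1 with h | h
    · exact ⟨0, le_refl 0, h⟩
    · have hcL : c < L := by
        rcases le_total (L - δ) (F 0) with h' | h'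
        · rw [max_eq_right h'] at hc2; linarith
        · rw [max_eq_left h'] at hc2; linarith
      obtain ⟨z, hz, hzc⟩ := hL.exists_between hcL
      obtain ⟨w, hw, rfl⟩ := hz
      have hw0 : (0:ℝ) ≤ w := hw
      have hFcw : ContinuousOn F (Set.Icc 0 w) := hFc.mono Set.Icc_subset_Ici_self
      have := intermediate_value_Icc hw0 hFcw ⟨hc1, hzc.1.le⟩
      obtain ⟨x, hx, hFx⟩ := this
      exact ⟨x, hx.1, hFx⟩
  set v : ℕ → ℝ := fun i => max (min (F 0 + (i:ℝ) * δ) (L - δ)) (F 0) with hv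
  have hvF0 : ∀ i, F 0 ≤ v i := fun i => le_max_right _ _
  have hvmax : ∀ i, v i ≤ max (L - δ) (F 0) :=
    fun i => max_le_max (min_le_right _ _) le_rfl
  have hvstep : ∀ i, v (i+1) ≤ v i + δ := by
    intro i
    simp only [hv]
    push_cast
    rcases le_total (F 0 + ((i:ℝ)+1) * δ) (L - δ) with h | h <;>
      rcases le_total (F 0 + (i:ℝ) * δ) (L - δ) with h' | h' <;>
      simp only [min_def, max_def] <;> split_ifs <;> linarith
  have hvmono : ∀ i, v i ≤ v (i+1) := by
    intro i
    simp only [hv]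
    push_cast
    rcases le_total (F 0 + ((i:ℝ)+1) * δ) (L - δ) with h | h <;>
      rcases le_total (F 0 + (i:ℝ) * δ) (L - δ) with h' | h' <;>
      simp only [min_def, max_def] <;> split_ifs <;> linarith
  set k := ⌈(L - F 0)/δ⌉₊ with hk
  have hvk : L - δ ≤ v k := by
    have h1 := Nat.le_ceil ((L - F 0)/δ)
    rw [div_le_iff₀ hδ] at h1
    simp only [hv, min_def, max_def]
    split_ifs <;> linarith [h1]
  choose y hy0 hyF using fun i => claim (v i) (hvF0 i) (hvmax i)
  set x : ℕ → ℝ := fun i => Nat.rec 0 (fun n xn => max xn (y (n+1))) i with hxdef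
  have hx0 : x 0 = 0 := rfl
  have hxsucc : ∀ i, x (i+1) = max (x i) (y (i+1)) := fun i => rfl
  have hxnn : ∀ i, 0 ≤ x i := by
    intro i
    induction i with
    | zero => exact le_refl 0
    | succ n ih => rw [hxsucc]; exact le_trans ih (le_max_left _ _)
  have hxmono : Monotone x := monotone_nat_of_le_succ (fun i => by
    rw [hxsucc]; exact le_max_left _ _)
  have hFx : ∀ i, F (x i) = v i := by
    intro i
    induction i with
    | zero =>
      rw [hx0]
      simp only [hv]
      push_cast
      rw [zero_mul, add_zero]
      exact (max_eq_right (min_le_left _ _)).symm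
    | succ n ih =>
      rw [hxsucc]
      rcases le_total (x n) (y (n+1)) with h | h
      · rw [max_eq_right h, hyF]
      · rw [max_eq_left h]
        have h1 : v (n+1) ≤ v n := by
          rw [← hyF (n+1), ← ih]
          exact hFm (Set.mem_Ici.mpr (hy0 (n+1))) (Set.mem_Ici.mpr (hxnn n)) h
        rw [ih]
        exact le_antisymm (hvmono n) h1
  have hev1 : ∀ i, ∀ᶠ n in atTop, |Fn n (x i) - F (x i)| < δ := by
    intro i
    have ht := Metric.tendsto_nhds.mp (hpt (x i) (Set.mem_Ici.mpr (hxnn i))) δ hδ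
    filter_upwards [ht] with n hn
    rw [Real.dist_eq] at hn
    exact hn
  have hevAll : ∀ᶠ n in atTop, ∀ i ∈ Finset.range (k+1), |Fn n (x i) - F (x i)| < δ := by
    rw [Filter.eventually_all_finset]
    exact fun i _ => hev1 i
  have hevSup : ∀ᶠ n in atTop, sSup (Fn n '' Set.Ici 0) < L + δ :=
    hsup.eventually_lt_const (by linarith)
  filter_upwards [hevAll, hevSup] with n hn hsupn
  intro b hb
  rw [Real.dist_eq]
  have hbA : BddAbove (Fn n '' Set.Ici 0) := by
    refine ⟨C, ?_⟩
    rintro z ⟨w, hw, rfl⟩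
    exact (abs_le.mp (hC n w hw)).2
  have hle_sup : ∀ w : ℝ, 0 ≤ w → Fn n w ≤ sSup (Fn n '' Set.Ici 0) :=
    fun w hw => le_csSup hbA ⟨w, hw, rfl⟩
  have hnk := hn k (Finset.mem_range.mpr (Nat.lt_succ_self k))
  obtain ⟨hnk1, hnk2⟩ := abs_sub_lt_iff.mp hnk
  by_cases hyk : x k ≤ b
  · -- tail region
    have h1 : F b ≤ L := hL.1 ⟨b, hb, rfl⟩
    have h2 : F (x k) ≤ F b := hFm (Set.mem_Ici.mpr (hxnn k)) hb hyk
    have h3 : Fn n (x k) ≤ Fn n b := hFnm n (Set.mem_Ici.mpr (hxnn k)) hb hyk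
    have h4 : Fn n b ≤ sSup (Fn n '' Set.Ici 0) := hle_sup b hb
    have h5 : F (x k) = v k := hFx k
    rw [abs_sub_lt_iff]
    constructor <;> [skip; skip] <;> simp only [hδdef] at * <;> linarith
  · -- middle region
    have hylt : b < x k := not_le.mp hyk
    have hne : ∃ i, b ≤ x i := ⟨k, hylt.le⟩
    have hj : b ≤ x (Nat.find hne) := Nat.find_spec hne
    have hjk : Nat.find hne ≤ k := Nat.find_min' hne hylt.le
    obtain ⟨i, hik, hxi, hxi1⟩ : ∃ i, i < k ∧ x i ≤ b ∧ b ≤ x (i+1) := by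
      rcases Nat.eq_zero_or_pos (Nat.find hne) with h0 | h0
      · have hb0 : b = 0 := by
          rw [h0] at hj; rw [hx0] at hj; exact le_antisymm hj hb
        have hk0 : 0 < k := by
          rcases Nat.eq_zero_or_pos k with hk' | hk'
          · exfalso; rw [hk', hx0] at hylt; rw [hb0] at hylt; exact lt_irrefl 0 hylt
          · exact hk'
        exact ⟨0, hk0, by rw [hx0, hb0], hb0 ▸ le_trans hb (hb0 ▸ (hxnn 1))⟩
      · have h1 : ¬ b ≤ x (Nat.find hne - 1) := Nat.find_min hne (Nat.sub_lt h0 one_pos)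
        refine ⟨Nat.find hne - 1, ?_, (not_le.mp h1).le, ?_⟩
        · exact lt_of_lt_of_le (Nat.sub_lt h0 one_pos) hjk
        · rw [Nat.sub_add_cancel h0]; exact hj
    have hnI := hn i (Finset.mem_range.mpr (by omega))
    have hnI1 := hn (i+1) (Finset.mem_range.mpr (by omega))
    obtain ⟨ha1, ha2⟩ := abs_sub_lt_iff.mp hnI
    obtain ⟨hb1, hb2⟩ := abs_sub_lt_iff.mp hnI1
    have hstep := hvstep i
    have hF1 : F (x i) ≤ F b := hFm (Set.mem_Ici.mpr (hxnn i)) hb hxi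
    have hF2 : F b ≤ F (x (i+1)) := hFm hb (Set.mem_Ici.mpr (hxnn (i+1))) hxi1
    have hG1 : Fn n (x i) ≤ Fn n b := hFnm n (Set.mem_Ici.mpr (hxnn i)) hb hxi
    have hG2 : Fn n b ≤ Fn n (x (i+1)) := hFnm n hb (Set.mem_Ici.mpr (hxnn (i+1))) hxi1
    have hv1 : F (x i) = v i := hFx i
    have hv2 : F (x (i+1)) = v (i+1) := hFx (i+1)
    rw [abs_sub_lt_iff]
    constructor <;> simp only [hδdef] at * <;> linarith
end

section
/- Let M > 0 and φ: [0,∞) → [0,∞) with φ(x) → 0 as x → ∞. Then the set K̃ of finite nonnegative Borel measures ζ on [0,∞) satisfying ζ([0,∞)) ≤ M and ∫ (y−x)⁺ dζ(y) ≤ φ(x) for all x ≥ 0 is compact in the Wasserstein₁ topology. -/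
/-!
The tail bound `μ (x + 1, ∞) ≤ ∫ (y - x)⁺ dμ ≤ φ x` together with the mass bound makes the
measures tight, so by Prokhorov's theorem they lie in a weakly compact set; the constraints
`∫ (y - x)⁺ dμ ≤ φ x` are weakly closed because integrals of nonnegative continuous functions are
weakly lower semicontinuous. On the resulting weakly compact set the first moment is the uniform
limit of the weakly continuous `μ ↦ ∫ min y n dμ`, with error `∫ (y - n)⁺ dμ ≤ φ n`, hence is
continuous; so the Wasserstein₁-compact set is the image of a weakly compact set under the
continuous map `μ ↦ (μ, ∫ y dμ)`.
-/

open MeasureTheory Filter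

/-- The space `𝓜₁`: finite nonnegative Borel measures on `[0,∞)` with finite first
moment. -/
def M1 : Type :=
  {ξ : FiniteMeasure ℝ // (ξ : Measure ℝ) (Set.Iio 0) = 0 ∧ Integrable id (ξ : Measure ℝ)}

/-- The Wasserstein₁ topology on `𝓜₁`: weak convergence plus convergence of first
moments. -/
noncomputable instance : TopologicalSpace M1 :=
  TopologicalSpace.induced
    (fun ξ : M1 => ((ξ.1 : FiniteMeasure ℝ), ∫ y, y ∂(ξ.1 : Measure ℝ)))
    inferInstance

open Set Topology
open scoped NNReal ENNReal

namespace BoundedContinuousFunction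

variable {X : Type*} [TopologicalSpace X]

noncomputable def truncatedPosPart {g : X → ℝ} (hg : Continuous g) (n : ℕ) : X →ᵇ ℝ :=
  mkOfBound ⟨fun x => min (max (g x) 0) n, by fun_prop⟩ n fun x y => by
    simpa using Real.dist_le_of_mem_Icc (x' := 0) (y' := n)
      ⟨le_min (le_max_right _ _) n.cast_nonneg, min_le_right _ _⟩
      ⟨le_min (le_max_right _ _) n.cast_nonneg, min_le_right _ _⟩

theorem truncatedPosPart_apply {g : X → ℝ} (hg : Continuous g) (n : ℕ) (x : X) :
    truncatedPosPart hg n x = min (max (g x) 0) n := rfl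

end BoundedContinuousFunction

open BoundedContinuousFunction

namespace MeasureTheory.FiniteMeasure

variable {X : Type*} [TopologicalSpace X] [MeasurableSpace X] [OpensMeasurableSpace X]

theorem lowerSemicontinuous_lintegral_ofReal {g : X → ℝ} (hg : Continuous g) :
    LowerSemicontinuous fun μ : FiniteMeasure X => ∫⁻ x, ENNReal.ofReal (g x) ∂μ := by
  have hsup (x : X) :
      ⨆ n : ℕ, ENNReal.ofReal (truncatedPosPart hg n x) = ENNReal.ofReal (g x) := by
    simp [truncatedPosPart_apply, ENNReal.ofReal_min, ENNReal.ofReal_max, ← inf_iSup_eq,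
      ENNReal.iSup_natCast]
  have hmono : Monotone fun n : ℕ => fun x => ENNReal.ofReal (truncatedPosPart hg n x) :=
    fun m n hmn x => ENNReal.ofReal_le_ofReal (min_le_min_left _ (Nat.cast_le.2 hmn))
  have heq (μ : FiniteMeasure X) : ∫⁻ x, ENNReal.ofReal (g x) ∂μ =
      ⨆ n : ℕ, ENNReal.ofReal (∫ x, truncatedPosPart hg n x ∂μ) := by
    simp_rw [← hsup]
    rw [lintegral_iSup (fun n => (truncatedPosPart hg n).continuous.measurable.ennreal_ofReal)
      hmono]
    refine iSup_congr fun n => ?_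
    exact (ofReal_integral_eq_lintegral_ofReal ((truncatedPosPart hg n).integrable μ)
      (Eventually.of_forall fun x => le_min (le_max_right _ _) n.cast_nonneg)).symm
  simp_rw [heq]
  exact lowerSemicontinuous_iSup fun n => (ENNReal.continuous_ofReal.comp
    (continuous_integral_boundedContinuousFunction _)).lowerSemicontinuous

end MeasureTheory.FiniteMeasure

open MeasureTheory.FiniteMeasure

theorem ae_nonneg_of_measure_Iio_eq_zero {μ : Measure ℝ} (h : μ (Iio 0) = 0) :
    ∀ᵐ y ∂μ, 0 ≤ y :=
  ae_iff.2 (by simp only [not_le]; exact h)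

theorem measure_compl_Icc_le_lintegral {μ : Measure ℝ} (hμ0 : μ (Iio 0) = 0) (x : ℝ) :
    μ (Icc 0 (x + 1))ᶜ ≤ ∫⁻ y, ENNReal.ofReal (y - x) ∂μ := by
  rw [← lintegral_indicator_one measurableSet_Icc.compl]
  refine lintegral_mono_ae ((ae_nonneg_of_measure_Iio_eq_zero hμ0).mono fun y hy => ?_)
  by_cases h : y ∈ (Icc 0 (x + 1))ᶜ
  · have : x + 1 < y := by simpa [hy] using h
    simpa [h] using ENNReal.one_le_ofReal.2 (by linarith)
  · simp [h]

theorem lintegral_ofReal_sub_eq_ofReal_integral {μ : Measure ℝ} [IsFiniteMeasure μ]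
    (hμ : Integrable id μ) (x : ℝ) :
    ∫⁻ y, ENNReal.ofReal (y - x) ∂μ = ENNReal.ofReal (∫ y, max (y - x) 0 ∂μ) := by
  have hint : Integrable (fun y => max (y - x) 0) μ := (hμ.sub (integrable_const x)).pos_part
  rw [ofReal_integral_eq_lintegral_ofReal hint (ae_of_all _ fun y => le_max_right _ _)]
  simp [ENNReal.ofReal_max]

theorem integral_id_sub_integral_truncatedPosPart {μ : Measure ℝ} [IsFiniteMeasure μ]
    (hμ0 : μ (Iio 0) = 0) (hμ : Integrable id μ) (n : ℕ) :
    ∫ y, y ∂μ - ∫ y, truncatedPosPart continuous_id n y ∂μ = ∫ y, max (y - n) 0 ∂μ := by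
  change ∫ y, id y ∂μ - _ = _
  rw [← integral_sub hμ ((truncatedPosPart continuous_id n).integrable μ)]
  refine integral_congr_ae ((ae_nonneg_of_measure_Iio_eq_zero hμ0).mono fun y hy => ?_)
  simp only [truncatedPosPart_apply, id, max_eq_left hy]
  rcases le_total y n with h | h <;> simp [h]

/-- Stating the tail condition with `lintegral` makes it weakly closed and, at `x = 0`, forces a
finite first moment. -/
def tailBoundedMeasures (m : ℝ≥0) (φ : ℝ → ℝ) : Set (FiniteMeasure ℝ) :=
  {μ | μ.mass ≤ m ∧ (μ : Measure ℝ) (Iio 0) = 0 ∧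
    ∀ x, 0 ≤ x → ∫⁻ y, ENNReal.ofReal (y - x) ∂μ ≤ ENNReal.ofReal (φ x)}

theorem isCompact_tailBoundedMeasures (m : ℝ≥0) {φ : ℝ → ℝ} (hφ : Tendsto φ atTop (𝓝 0)) :
    IsCompact (tailBoundedMeasures m φ) := by
  have hu : Tendsto (fun n : ℕ => (φ n).toNNReal) atTop (𝓝 0) := by
    simpa [Function.comp_def] using
      (continuous_real_toNNReal.tendsto 0).comp (hφ.comp tendsto_natCast_atTop_atTop)
  have hK : Monotone fun n : ℕ => Icc (0 : ℝ) (n + 1) :=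
    fun m n hmn => Icc_subset_Icc_right (by exact_mod_cast Nat.add_le_add_right hmn 1)
  have hT := isCompact_setOfPred_finiteMeasure_mass_le_compl_isCompact_le m hu
    (fun n => isCompact_Icc) (Or.inr hK)
  have hC : IsClosed {μ : FiniteMeasure ℝ |
      ∀ x, 0 ≤ x → ∫⁻ y, ENNReal.ofReal (y - x) ∂μ ≤ ENNReal.ofReal (φ x)} := by
    simp only [ofPred_forall]
    exact isClosed_biInter fun x _ =>
      (lowerSemicontinuous_lintegral_ofReal (by fun_prop)).isClosed_preimage _
  have htail (μ : FiniteMeasure ℝ) (n : ℕ) : μ (Icc 0 (n + 1))ᶜ ≤ (φ n).toNNReal ↔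
      (μ : Measure ℝ) (Icc 0 (n + 1))ᶜ ≤ ENNReal.ofReal (φ n) := by
    rw [← ENNReal.coe_le_coe, ennreal_coeFn_eq_coeFn_toMeasure]
    rfl
  -- On the Prokhorov set `μ (Iio 0) ≤ φ n` for all `n`, so the support condition comes for free.
  convert hT.inter_right hC using 1
  ext μ
  simp only [tailBoundedMeasures, mem_inter_iff, mem_ofPred_eq]
  constructor
  · rintro ⟨hmass, hneg, hmom⟩
    refine ⟨⟨hmass, fun n => (htail μ n).2 ?_⟩, hmom⟩
    exact (measure_compl_Icc_le_lintegral hneg n).trans (hmom n n.cast_nonneg)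
  · rintro ⟨⟨hmass, htails⟩, hmom⟩
    have hφn : Tendsto (fun n : ℕ => ENNReal.ofReal (φ n)) atTop (𝓝 0) := by
      simpa using ENNReal.tendsto_ofReal (hφ.comp tendsto_natCast_atTop_atTop)
    refine ⟨hmass, le_zero_iff.1 (ge_of_tendsto' hφn fun n => ?_), hmom⟩
    exact (measure_mono fun y hy h => absurd h.1 (not_le.2 hy)).trans ((htail μ n).1 (htails n))

theorem integrable_id_of_mem_tailBoundedMeasures {m : ℝ≥0} {φ : ℝ → ℝ} {μ : FiniteMeasure ℝ}
    (hμ : μ ∈ tailBoundedMeasures m φ) : Integrable id (μ : Measure ℝ) := by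
  refine ⟨measurable_id.aestronglyMeasurable,
    (hasFiniteIntegral_iff_ofReal (ae_nonneg_of_measure_Iio_eq_zero hμ.2.1)).2 ?_⟩
  simpa using (hμ.2.2 0 le_rfl).trans_lt ENNReal.ofReal_lt_top

theorem mem_tailBoundedMeasures_toNNReal_iff {μ : FiniteMeasure ℝ}
    (hμ0 : (μ : Measure ℝ) (Iio 0) = 0) (hμ : Integrable id (μ : Measure ℝ)) {M : ℝ}
    {φ : ℝ → ℝ} (hφ : ∀ x, 0 ≤ φ x) :
    μ ∈ tailBoundedMeasures M.toNNReal φ ↔ (μ : Measure ℝ) univ ≤ ENNReal.ofReal M ∧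
      ∀ x, 0 ≤ x → ∫ y, max (y - x) 0 ∂(μ : Measure ℝ) ≤ φ x := by
  simp only [tailBoundedMeasures, mem_ofPred_eq, hμ0, true_and, ← ennreal_mass,
    lintegral_ofReal_sub_eq_ofReal_integral hμ, ENNReal.ofReal_le_ofReal_iff (hφ _)]
  rw [ENNReal.ofReal, ENNReal.coe_le_coe]

theorem continuousOn_integral_id_tailBoundedMeasures (m : ℝ≥0) {φ : ℝ → ℝ}
    (hφ : Tendsto φ atTop (𝓝 0)) :
    ContinuousOn (fun μ : FiniteMeasure ℝ => ∫ y, y ∂(μ : Measure ℝ))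
      (tailBoundedMeasures m φ) := by
  refine TendstoUniformlyOn.continuousOn (p := atTop)
    (F := fun (n : ℕ) (μ : FiniteMeasure ℝ) => ∫ y, truncatedPosPart continuous_id n y ∂μ) ?_
    (Eventually.of_forall fun n =>
      (continuous_integral_boundedContinuousFunction _).continuousOn).frequently
  rw [Metric.tendstoUniformlyOn_iff]
  intro ε hε
  filter_upwards [(hφ.comp tendsto_natCast_atTop_atTop).eventually (gt_mem_nhds hε)]
    with n hn μ hμ
  have htail_nonneg : 0 ≤ ∫ y, max (y - n) 0 ∂(μ : Measure ℝ) :=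
    integral_nonneg fun _ => le_max_right _ _
  have hμ1 := integrable_id_of_mem_tailBoundedMeasures hμ
  rw [Real.dist_eq, integral_id_sub_integral_truncatedPosPart hμ.2.1 hμ1,
    abs_of_nonneg htail_nonneg]
  calc ∫ y, max (y - n) 0 ∂(μ : Measure ℝ)
      = (∫⁻ y, ENNReal.ofReal (y - n) ∂μ).toReal := by
        rw [lintegral_ofReal_sub_eq_ofReal_integral hμ1, ENNReal.toReal_ofReal htail_nonneg]
    _ ≤ (ENNReal.ofReal (φ n)).toReal :=
        ENNReal.toReal_mono ENNReal.ofReal_ne_top (hμ.2.2 n n.cast_nonneg)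
    _ < ε := by rw [ENNReal.toReal_ofReal']; exact max_lt hn hε

theorem stmt16_general (M : ℝ) (φ : ℝ → ℝ) (hφnn : ∀ x, 0 ≤ φ x)
    (hφ : Tendsto φ atTop (nhds 0)) :
    IsCompact {ζ : M1 | (ζ.1 : Measure ℝ) Set.univ ≤ ENNReal.ofReal M ∧
      ∀ x : ℝ, 0 ≤ x → (∫ y, max (y - x) 0 ∂(ζ.1 : Measure ℝ)) ≤ φ x} := by
  set S := {ζ : M1 | (ζ.1 : Measure ℝ) Set.univ ≤ ENNReal.ofReal M ∧
      ∀ x : ℝ, 0 ≤ x → (∫ y, max (y - x) 0 ∂(ζ.1 : Measure ℝ)) ≤ φ x}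
  let val : M1 → FiniteMeasure ℝ := fun ζ => ζ.1
  have hS : val '' S = tailBoundedMeasures M.toNNReal φ := by
    ext μ
    constructor
    · rintro ⟨ζ, hζ, rfl⟩
      exact (mem_tailBoundedMeasures_toNNReal_iff ζ.2.1 ζ.2.2 hφnn).2 hζ
    · intro hμ
      have hμ1 := integrable_id_of_mem_tailBoundedMeasures hμ
      exact ⟨⟨μ, hμ.2.1, hμ1⟩, (mem_tailBoundedMeasures_toNNReal_iff hμ.2.1 hμ1 hφnn).1 hμ,
        rfl⟩
  let graph : FiniteMeasure ℝ → FiniteMeasure ℝ × ℝ := fun μ => (μ, ∫ y, y ∂(μ : Measure ℝ))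
  have hinducing : Topology.IsInducing (graph ∘ val) := ⟨rfl⟩
  rw [hinducing.isCompact_iff, image_comp, hS]
  exact (isCompact_tailBoundedMeasures _ hφ).image_of_continuousOn
    (continuousOn_id.prodMk (continuousOn_integral_id_tailBoundedMeasures _ hφ))

theorem stmt16 (M : ℝ) (hM : 0 < M) (φ : ℝ → ℝ) (hφnn : ∀ x, 0 ≤ φ x)
    (hφ : Tendsto φ atTop (nhds 0)) :
    IsCompact {ζ : M1 | (ζ.1 : Measure ℝ) Set.univ ≤ ENNReal.ofReal M ∧
      ∀ x : ℝ, 0 ≤ x → (∫ y, max (y - x) 0 ∂(ζ.1 : Measure ℝ)) ≤ φ x} :=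
  stmt16_general M φ hφnn hφ
end
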